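/- arXiv:1912.13272 — 2 statements merged into one kernel-verified Lean document; each statement's English description precedes it below -/
import Mathlib

section
/- Let N, K be positive natural numbers, let H_S be an N×N complex Hermitian matrix, and let ψ : [0,∞) → ℂ^N be a differentiable function satisfying for all t ≥ 0 the integro-differential equation ψ'(t) = −i H_S ψ(t) − ∫₀ᵗ G_Lorentz(t−s) ψ(s) ds. Define for each j = 1,…,K the function φ_j(t) = −i g_j ∫₀ᵗ exp(−(γ_j/2 + i ε_j)(t−s)) ψ(s) ds. Then the (K+1)N-dimensional vector ψ̃(t) = (ψ(t), φ_1(t), …, φ_K(t)) is differentiable and satisfies the Schrödinger equation ψ̃'(t) = −i H_eff ψ̃(t) with initial condition ψ̃(0) = (ψ(0), 0, …, 0). -/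
/-!
With `λⱼ = γⱼ/2 + iεⱼ`, the pseudomode is `φⱼ(t) = -i gⱼ e^{-λⱼ t} ∫₀ᵗ e^{λⱼ s} ψ(s) ds`, so the
product rule and the fundamental theorem of calculus give `φⱼ' = -i gⱼ ψ - λⱼ φⱼ`, the `j`-th block
row of `-i H_eff ψ̃`. For `s ≤ t` the kernel `G_Lorentz(t - s)` is `∑ⱼ gⱼ² e^{-λⱼ (t - s)}`, so the
memory integral equals `i ∑ⱼ gⱼ φⱼ(t)` and the integro-differential equation becomes the `0`-th
block row.
-/

open MeasureTheory Matrix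

/-- The reservoir correlation function for a positive combination of `K` Lorentz peaks:
`G_Lorentz(t) = Σ_j g_j² exp(−(γ_j/2)|t| − i ε_j t)`. -/
noncomputable def GLorentz (K : ℕ) (g γ ε : Fin K → ℝ) (t : ℝ) : ℂ :=
  ∑ j, (g j : ℂ) ^ 2 *
    Complex.exp (-((γ j : ℂ) / 2) * (|t| : ℝ) - Complex.I * (ε j : ℂ) * (t : ℂ))

/-- The effective non-Hermitian Hamiltonian `H_eff`: the `(K+1)N × (K+1)N` block matrix
whose `(0,0)` block is `H_S`, whose `(0,j)` and `(j,0)` blocks are `g_j I_N`, and whose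
`(j,j)` block is `(ε_j − i γ_j/2) I_N`, all remaining blocks being zero. -/
noncomputable def Heff (N K : ℕ) (HS : Matrix (Fin N) (Fin N) ℂ) (g γ ε : Fin K → ℝ) :
    Matrix (Fin N ⊕ Fin K × Fin N) (Fin N ⊕ Fin K × Fin N) ℂ :=
  Matrix.fromBlocks HS
    (fun a p => if a = p.2 then (g p.1 : ℂ) else 0)
    (fun p a => if p.2 = a then (g p.1 : ℂ) else 0)
    (fun p q => if p = q then (ε p.1 : ℂ) - Complex.I * ((γ p.1 : ℂ) / 2) else 0)

theorem hasDerivWithinAt_integral_Ici {E : Type*} [NormedAddCommGroup E] [NormedSpace ℝ E]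
    [CompleteSpace E] {f : ℝ → E} {a t : ℝ} (hf : ContinuousOn f (Set.Ici a)) (ht : a ≤ t) :
    HasDerivWithinAt (fun u => ∫ s in a..u, f s) (f t) (Set.Ici a) t := by
  have hint : IntervalIntegrable f volume a t :=
    (hf.mono Set.Icc_subset_Ici_self).intervalIntegrable_of_Icc ht
  rcases ht.eq_or_lt with rfl | hat
  · exact intervalIntegral.integral_hasDerivWithinAt_right (t := Set.Ioi a) hint
      ((hf.mono Set.Ioi_subset_Ici_self).stronglyMeasurableAtFilter_nhdsWithin measurableSet_Ioi a)
      ((hf a Set.self_mem_Ici).mono Set.Ioi_subset_Ici_self)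
  · exact (intervalIntegral.integral_hasDerivAt_right hint
      ((hf.mono Set.Ioi_subset_Ici_self).stronglyMeasurableAtFilter isOpen_Ioi t hat)
      (hf.continuousAt (Ici_mem_nhds hat))).hasDerivWithinAt

theorem hasDerivWithinAt_integral_cexp_mul_smul {E : Type*} [NormedAddCommGroup E]
    [NormedSpace ℂ E] [CompleteSpace E] {f : ℝ → E} {a t : ℝ} (hf : ContinuousOn f (Set.Ici a))
    (ht : a ≤ t) (c : ℂ) :
    HasDerivWithinAt (fun u => ∫ s in a..u, Complex.exp (-c * ((u - s : ℝ) : ℂ)) • f s)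
      (f t - c • ∫ s in a..t, Complex.exp (-c * ((t - s : ℝ) : ℂ)) • f s) (Set.Ici a) t := by
  have hfactor : ∀ u : ℝ, ∫ s in a..u, Complex.exp (-c * ((u - s : ℝ) : ℂ)) • f s =
      Complex.exp (-c * u) • ∫ s in a..u, Complex.exp (c * s) • f s := by
    intro u
    rw [← intervalIntegral.integral_smul]
    congr 1 with s
    rw [smul_smul, ← Complex.exp_add]
    push_cast
    ring_nf
  have hexp : HasDerivAt (fun u : ℝ => Complex.exp (-c * u)) (-c * Complex.exp (-c * t)) t := by
    simpa [mul_comm] using ((Complex.ofRealCLM.hasDerivAt (x := t)).const_mul (-c)).cexp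
  have hprim : HasDerivWithinAt (fun u => ∫ s in a..u, Complex.exp (c * s) • f s)
      (Complex.exp (c * t) • f t) (Set.Ici a) t :=
    hasDerivWithinAt_integral_Ici
      ((by fun_prop : Continuous fun s : ℝ => Complex.exp (c * s)).continuousOn.smul hf) ht
  simp_rw [hfactor]
  refine (hexp.hasDerivWithinAt.smul hprim).congr_deriv ?_
  rw [smul_smul, ← Complex.exp_add, neg_mul, neg_add_cancel, Complex.exp_zero, one_smul]
  module

theorem GLorentz_of_nonneg {K : ℕ} (g γ ε : Fin K → ℝ) {τ : ℝ} (hτ : 0 ≤ τ) :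
    GLorentz K g γ ε τ =
      ∑ j, (g j : ℂ) ^ 2 * Complex.exp (-((γ j : ℂ) / 2 + Complex.I * ε j) * τ) := by
  simp only [GLorentz, abs_of_nonneg hτ]
  congr! 3
  ring

theorem integral_GLorentz_sub_smul {E : Type*} [NormedAddCommGroup E] [NormedSpace ℂ E]
    [CompleteSpace E] {K : ℕ} (g γ ε : Fin K → ℝ) {f : ℝ → E} {t : ℝ} (ht : 0 ≤ t)
    (hf : ContinuousOn f (Set.Icc 0 t)) :
    ∫ s in (0:ℝ)..t, GLorentz K g γ ε (t - s) • f s =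
      ∑ j, ((g j : ℂ) ^ 2) • ∫ s in (0:ℝ)..t,
        Complex.exp (-((γ j : ℂ) / 2 + Complex.I * ε j) * ((t - s : ℝ) : ℂ)) • f s := by
  have hkernel : Set.EqOn (fun s => GLorentz K g γ ε (t - s) • f s)
      (fun s => ∑ j, ((g j : ℂ) ^ 2) •
        Complex.exp (-((γ j : ℂ) / 2 + Complex.I * ε j) * ((t - s : ℝ) : ℂ)) • f s)
      (Set.uIcc 0 t) := by
    intro s hs
    rw [Set.uIcc_of_le ht] at hs
    simp only [GLorentz_of_nonneg g γ ε (sub_nonneg.2 hs.2), Finset.sum_smul, smul_smul]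
  rw [intervalIntegral.integral_congr hkernel, intervalIntegral.integral_finsetSum]
  · simp only [intervalIntegral.integral_smul]
  · intro j _
    refine ContinuousOn.intervalIntegrable_of_Icc ht (ContinuousOn.const_smul ?_ _)
    exact (by fun_prop : Continuous fun s : ℝ =>
      Complex.exp (-((γ j : ℂ) / 2 + Complex.I * ε j) * ((t - s : ℝ) : ℂ))).continuousOn.smul hf

theorem Heff_mulVec_sumElim {N K : ℕ} (HS : Matrix (Fin N) (Fin N) ℂ) (g γ ε : Fin K → ℝ)
    (x : Fin N → ℂ) (y : Fin K → Fin N → ℂ) :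
    Heff N K HS g γ ε *ᵥ Sum.elim x (fun p => y p.1 p.2) =
      Sum.elim (HS *ᵥ x + ∑ j, (g j : ℂ) • y j)
        (fun p => (g p.1 : ℂ) * x p.2 +
          ((ε p.1 : ℂ) - Complex.I * ((γ p.1 : ℂ) / 2)) * y p.1 p.2) := by
  rw [show Heff N K HS g γ ε *ᵥ _ = _ from fromBlocks_mulVec _ _ _ _ _]
  congr 1
  · ext a
    simp [mulVec, dotProduct, Fintype.sum_prod_type, Finset.sum_apply]
  · ext p
    simp [mulVec, dotProduct]

theorem HasDerivWithinAt.sumElim_uncurry {ι κ n E : Type*} [Fintype ι] [Fintype κ] [Fintype n]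
    [NormedAddCommGroup E] [NormedSpace ℝ E] {F : ℝ → ι → E} {Φ : κ → ℝ → n → E} {F' : ι → E}
    {Φ' : κ → n → E} {s : Set ℝ} {t : ℝ}
    (hF : HasDerivWithinAt F F' s t) (hΦ : ∀ j, HasDerivWithinAt (Φ j) (Φ' j) s t) :
    HasDerivWithinAt (fun u => Sum.elim (F u) fun p : κ × n => Φ p.1 u p.2)
      (Sum.elim F' fun p : κ × n => Φ' p.1 p.2) s t := by
  refine hasDerivWithinAt_pi.2 ?_
  rintro (i | ⟨j, a⟩)
  · exact hasDerivWithinAt_pi.1 hF i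
  · exact hasDerivWithinAt_pi.1 (hΦ j) a

theorem exists_markovian_dilation_lorentz_general
    (N K : ℕ)
    (HS : Matrix (Fin N) (Fin N) ℂ)
    (g γ ε : Fin K → ℝ)
    (ψ : ℝ → Fin N → ℂ)
    (hψ : ∀ t : ℝ, 0 ≤ t →
      HasDerivWithinAt ψ
        ((-Complex.I) • HS.mulVec (ψ t) -
          ∫ s in (0:ℝ)..t, GLorentz K g γ ε (t - s) • ψ s)
        (Set.Ici 0) t)
    (φ : Fin K → ℝ → Fin N → ℂ)
    (hφ : ∀ j t, φ j t =
      (-Complex.I * (g j : ℂ)) •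
        ∫ s in (0:ℝ)..t,
          Complex.exp (-((γ j : ℂ) / 2 + Complex.I * (ε j : ℂ)) * ((t - s : ℝ) : ℂ)) • ψ s)
    (ψtilde : ℝ → (Fin N ⊕ Fin K × Fin N) → ℂ)
    (hψtilde : ∀ t, ψtilde t = Sum.elim (ψ t) fun p => φ p.1 t p.2) :
    ψtilde 0 = Sum.elim (ψ 0) 0 ∧
    ∀ t : ℝ, 0 ≤ t →
      HasDerivWithinAt ψtilde
        ((-Complex.I) • (Heff N K HS g γ ε).mulVec (ψtilde t)) (Set.Ici 0) t := by
  obtain rfl : ψtilde = fun t => Sum.elim (ψ t) fun p => φ p.1 t p.2 := funext hψtilde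
  refine ⟨?_, fun t ht => ?_⟩
  · ext (a | ⟨j, a⟩) <;> simp [hφ]
  have hψc : ContinuousOn ψ (Set.Ici 0) := fun u hu => (hψ u hu).continuousWithinAt
  have hφ' : ∀ j, HasDerivWithinAt (φ j)
      ((-Complex.I * (g j : ℂ)) • ψ t - ((γ j : ℂ) / 2 + Complex.I * (ε j : ℂ)) • φ j t)
      (Set.Ici 0) t := by
    intro j
    rw [show φ j = _ from funext (hφ j)]
    refine ((hasDerivWithinAt_integral_cexp_mul_smul hψc ht _).const_smul
      (-Complex.I * (g j : ℂ))).congr_deriv ?_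
    beta_reduce
    module
  have hmemory : ∫ s in (0:ℝ)..t, GLorentz K g γ ε (t - s) • ψ s =
      Complex.I • ∑ j, (g j : ℂ) • φ j t := by
    rw [integral_GLorentz_sub_smul g γ ε ht (hψc.mono Set.Icc_subset_Ici_self), Finset.smul_sum]
    refine Finset.sum_congr rfl fun j _ => ?_
    rw [hφ j t, smul_smul, smul_smul]
    congr 1
    linear_combination (g j : ℂ) ^ 2 * Complex.I_sq
  refine ((hψ t ht).sumElim_uncurry hφ').congr_deriv ?_
  beta_reduce
  rw [Heff_mulVec_sumElim HS g γ ε (ψ t) (fun j => φ j t), hmemory]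
  ext (a | ⟨j, a⟩)
  · simp only [Sum.elim_inl, Pi.smul_apply, Pi.sub_apply, Pi.add_apply, smul_eq_mul]
    ring
  · simp only [Sum.elim_inr, Pi.smul_apply, Pi.sub_apply, smul_eq_mul]
    linear_combination (-((γ j : ℂ) / 2) * φ j t a) * Complex.I_sq

/-- If `ψ : [0,∞) → ℂ^N` is differentiable and satisfies the
integro-differential equation `ψ'(t) = −i H_S ψ(t) − ∫₀ᵗ G_Lorentz(t−s) ψ(s) ds`, and the
pseudomode vectors are defined by `φ_j(t) = −i g_j ∫₀ᵗ e^{−(γ_j/2 + iε_j)(t−s)} ψ(s) ds`,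
then the combined vector `ψ̃ = (ψ, φ_1, …, φ_K)` is differentiable and satisfies the
Schrödinger equation `ψ̃'(t) = −i H_eff ψ̃(t)` with initial condition `ψ̃(0) = (ψ(0), 0, …, 0)`. -/
theorem exists_markovian_dilation_lorentz
    (N K : ℕ) (hN : 0 < N) (hK : 0 < K)
    (HS : Matrix (Fin N) (Fin N) ℂ) (hHS : HS.IsHermitian)
    (g γ ε : Fin K → ℝ) (hg : ∀ j, 0 < g j) (hγ : ∀ j, 0 < γ j)
    (ψ : ℝ → Fin N → ℂ)
    (hψ : ∀ t : ℝ, 0 ≤ t →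
      HasDerivWithinAt ψ
        ((-Complex.I) • HS.mulVec (ψ t) -
          ∫ s in (0:ℝ)..t, GLorentz K g γ ε (t - s) • ψ s)
        (Set.Ici 0) t)
    (φ : Fin K → ℝ → Fin N → ℂ)
    (hφ : ∀ j t, φ j t =
      (-Complex.I * (g j : ℂ)) •
        ∫ s in (0:ℝ)..t,
          Complex.exp (-((γ j : ℂ) / 2 + Complex.I * (ε j : ℂ)) * ((t - s : ℝ) : ℂ)) • ψ s)
    (ψtilde : ℝ → (Fin N ⊕ Fin K × Fin N) → ℂ)
    (hψtilde : ∀ t, ψtilde t = Sum.elim (ψ t) fun p => φ p.1 t p.2) :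
    ψtilde 0 = Sum.elim (ψ 0) 0 ∧
    ∀ t : ℝ, 0 ≤ t →
      HasDerivWithinAt ψtilde
        ((-Complex.I) • (Heff N K HS g γ ε).mulVec (ψtilde t)) (Set.Ici 0) t :=
  exists_markovian_dilation_lorentz_general N K HS g γ ε ψ hψ φ hφ ψtilde hψtilde
end

section
/- Let N, K be positive natural numbers, let H_S be an N×N complex Hermitian matrix, and let ψ̃ = (ψ, φ_1, …, φ_K) : [0,∞) → ℂ^{(K+1)N} be a differentiable solution of the Schrödinger equation ψ̃'(t) = −i H_eff ψ̃(t) with initial condition φ_j(0) = 0 for all j = 1,…,K. Then the first component ψ : [0,∞) → ℂ^N satisfies the integro-differential equation ψ'(t) = −i H_S ψ(t) − ∫₀ᵗ G_Lorentz(t−s) ψ(s) ds for all t ≥ 0. -/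
/-!
Each reservoir component solves the linear equation `φ_j' = λ_j φ_j − i g_j ψ`, with
`λ_j = −γ_j/2 − i ε_j`, and starts at `0`, so by variation of constants
`φ_j(t) = −i g_j ∫₀ᵗ e^{λ_j (t−s)} ψ(s) ds`. Substituting this into the system equation
`ψ' = −i H_S ψ − i Σ_j g_j φ_j` turns the coupling term into
`−Σ_j g_j² ∫₀ᵗ e^{λ_j (t−s)} ψ(s) ds = −∫₀ᵗ G_Lorentz(t−s) ψ(s) ds`, since `|t − s| = t − s` on `[0, t]`.
-/

open MeasureTheory Matrix

open Set Complex

theorem eq_integral_exp_smul_of_hasDerivWithinAt {E : Type*} [NormedAddCommGroup E]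
    [NormedSpace ℂ E] [CompleteSpace E] {u f : ℝ → E} {c : ℂ}
    (hf : ContinuousOn f (Ici 0))
    (hu : ∀ t ∈ Ici (0 : ℝ), HasDerivWithinAt u (c • u t + f t) (Ici 0) t)
    (hu0 : u 0 = 0) {t : ℝ} (ht : 0 ≤ t) :
    u t = ∫ s in (0 : ℝ)..t, exp (c * (t - s)) • f s := by
  have hexp : ∀ s : ℝ, HasDerivAt (fun s : ℝ => exp (-c * s)) (exp (-c * s) * -c) s :=
    fun s => (((hasDerivAt_id s).ofReal_comp).const_mul (-c)).cexp.congr_deriv (by simp)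
  have hw : ∀ s ∈ Ici (0 : ℝ), HasDerivWithinAt (fun s : ℝ => exp (-c * s) • u s)
      (exp (-c * s) • f s) (Ici 0) s := fun s hs =>
    ((hexp s).hasDerivWithinAt.smul (hu s hs)).congr_deriv (by module)
  have hFTC := intervalIntegral.integral_eq_sub_of_hasDerivAt_of_le ht
    (fun s hs => (hw s hs.1).continuousWithinAt.mono Icc_subset_Ici_self)
    (fun s hs => (hw s hs.1.le).hasDerivAt (Ici_mem_nhds hs.1))
    (ContinuousOn.intervalIntegrable_of_Icc ht <|
      (((continuous_ofReal.const_mul (-c)).cexp).continuousOn.smul hf).mono Icc_subset_Ici_self)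
  have hsplit (s : ℝ) : exp (c * (t - s)) • f s = exp (c * t) • exp (-c * s) • f s := by
    rw [smul_smul, ← exp_add]
    ring_nf
  simp_rw [hsplit, intervalIntegral.integral_smul, hFTC, hu0, smul_zero, sub_zero, smul_smul,
    ← exp_add]
  simp

section Lorentz

variable {N K : ℕ} (HS : Matrix (Fin N) (Fin N) ℂ) (g γ ε : Fin K → ℝ)

/-- `-i` times the `(j,j)` block entry of `H_eff`, i.e. `−γ_j/2 − i ε_j`. -/
noncomputable def lorentzRate (j : Fin K) : ℂ := -I * ((ε j : ℂ) - I * ((γ j : ℂ) / 2))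

theorem GLorentz_of_nonneg_s2 {t : ℝ} (ht : 0 ≤ t) :
    GLorentz K g γ ε t = ∑ j, (g j : ℂ) ^ 2 * exp (lorentzRate γ ε j * t) := by
  refine Finset.sum_congr rfl fun j _ => ?_
  rw [abs_of_nonneg ht, lorentzRate]
  ring_nf
  rw [I_sq]
  ring_nf

theorem integral_GLorentz_smul {E : Type*} [NormedAddCommGroup E] [NormedSpace ℂ E]
    [CompleteSpace E] {f : ℝ → E} {t : ℝ} (ht : 0 ≤ t) (hf : ContinuousOn f (Icc 0 t)) :
    ∫ s in (0 : ℝ)..t, GLorentz K g γ ε (t - s) • f s =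
      ∑ j, ((g j : ℂ) ^ 2) • ∫ s in (0 : ℝ)..t, exp (lorentzRate γ ε j * (t - s)) • f s := by
  have hkernel : ∀ s ∈ uIcc 0 t, GLorentz K g γ ε (t - s) • f s =
      ∑ j, ((g j : ℂ) ^ 2) • exp (lorentzRate γ ε j * (t - s)) • f s := by
    intro s hs
    rw [uIcc_of_le ht] at hs
    rw [GLorentz_of_nonneg_s2 g γ ε (sub_nonneg.2 hs.2), Finset.sum_smul]
    simp [smul_smul]
  rw [intervalIntegral.integral_congr hkernel, intervalIntegral.integral_finsetSum]
  · simp_rw [intervalIntegral.integral_smul]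
  · intro j _
    refine ContinuousOn.intervalIntegrable_of_Icc ht (ContinuousOn.const_smul ?_ _)
    exact (Continuous.continuousOn (by fun_prop)).smul hf

theorem Heff_mulVec_inl (x : Fin N → ℂ) (y : Fin K × Fin N → ℂ) (a : Fin N) :
    (Heff N K HS g γ ε *ᵥ Sum.elim x y) (Sum.inl a) =
      (HS *ᵥ x) a + ∑ j, (g j : ℂ) * y (j, a) := by
  simp [Heff, fromBlocks, mulVec, dotProduct, Fintype.sum_sum_type, Fintype.sum_prod_type]

theorem Heff_mulVec_inr (x : Fin N → ℂ) (y : Fin K × Fin N → ℂ) (j : Fin K) (a : Fin N) :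
    (Heff N K HS g γ ε *ᵥ Sum.elim x y) (Sum.inr (j, a)) =
      g j * x a + ((ε j : ℂ) - I * ((γ j : ℂ) / 2)) * y (j, a) := by
  simp [Heff, fromBlocks, mulVec, dotProduct, Fintype.sum_sum_type]

end Lorentz

section Schroedinger

variable {N K : ℕ} {HS : Matrix (Fin N) (Fin N) ℂ} {g γ ε : Fin K → ℝ}
  {ψ : ℝ → Fin N → ℂ} {φ : Fin K → ℝ → Fin N → ℂ} {S : Set ℝ} {t : ℝ}

theorem hasDerivWithinAt_system_of_schroedinger
    (h : HasDerivWithinAt (fun t => Sum.elim (ψ t) fun p => φ p.1 t p.2)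
      ((-I) • Heff N K HS g γ ε *ᵥ Sum.elim (ψ t) fun p => φ p.1 t p.2) S t) :
    HasDerivWithinAt ψ ((-I) • HS *ᵥ ψ t + ∑ j, (-I * g j) • φ j t) S t := by
  refine hasDerivWithinAt_pi.2 fun a => (hasDerivWithinAt_pi.1 h (Sum.inl a)).congr_deriv ?_
  rw [Pi.smul_apply, Heff_mulVec_inl]
  simp [Finset.mul_sum, mul_add, mul_assoc]

theorem hasDerivWithinAt_reservoir_of_schroedinger
    (h : HasDerivWithinAt (fun t => Sum.elim (ψ t) fun p => φ p.1 t p.2)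
      ((-I) • Heff N K HS g γ ε *ᵥ Sum.elim (ψ t) fun p => φ p.1 t p.2) S t) (j : Fin K) :
    HasDerivWithinAt (φ j) (lorentzRate γ ε j • φ j t + (-I * g j) • ψ t) S t := by
  refine hasDerivWithinAt_pi.2 fun a =>
    (hasDerivWithinAt_pi.1 h (Sum.inr (j, a))).congr_deriv ?_
  rw [Pi.smul_apply, Heff_mulVec_inr]
  simp [lorentzRate]
  ring

end Schroedinger

theorem schroedinger_solution_solves_integroDifferential_general
    (N K : ℕ)
    (HS : Matrix (Fin N) (Fin N) ℂ)
    (g γ ε : Fin K → ℝ)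
    (ψ : ℝ → Fin N → ℂ) (φ : Fin K → ℝ → Fin N → ℂ)
    (ψtilde : ℝ → (Fin N ⊕ Fin K × Fin N) → ℂ)
    (hψtilde : ∀ t, ψtilde t = Sum.elim (ψ t) fun p => φ p.1 t p.2)
    (hSchr : ∀ t : ℝ, 0 ≤ t →
      HasDerivWithinAt ψtilde
        ((-Complex.I) • (Heff N K HS g γ ε).mulVec (ψtilde t)) (Set.Ici 0) t)
    (hinit : ∀ j, φ j 0 = 0) :
    ∀ t : ℝ, 0 ≤ t →
      HasDerivWithinAt ψ
        ((-Complex.I) • HS.mulVec (ψ t) -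
          ∫ s in (0:ℝ)..t, GLorentz K g γ ε (t - s) • ψ s)
        (Set.Ici 0) t := by
  obtain rfl : ψtilde = fun t => Sum.elim (ψ t) fun p => φ p.1 t p.2 := funext hψtilde
  have hψ : ContinuousOn ψ (Ici 0) := fun s hs =>
    (hasDerivWithinAt_system_of_schroedinger (hSchr s hs)).continuousWithinAt
  intro t ht
  have hφ (j : Fin K) :
      φ j t = ∫ s in (0 : ℝ)..t, exp (lorentzRate γ ε j * (t - s)) • (-I * g j) • ψ s :=
    eq_integral_exp_smul_of_hasDerivWithinAt (hψ.const_smul (-I * (g j : ℂ)))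
      (fun s hs => hasDerivWithinAt_reservoir_of_schroedinger (hSchr s hs) j) (hinit j) ht
  convert hasDerivWithinAt_system_of_schroedinger (hSchr t ht) using 1
  rw [integral_GLorentz_smul g γ ε ht (hψ.mono Icc_subset_Ici_self), sub_eq_add_neg,
    ← Finset.sum_neg_distrib]
  congr 1
  refine Finset.sum_congr rfl fun j _ => ?_
  have hcoupling : -I * g j * (-I * g j) = -(g j : ℂ) ^ 2 := by
    linear_combination (g j : ℂ) ^ 2 * I_sq
  simp_rw [hφ, smul_comm (exp _) (-I * g j), intervalIntegral.integral_smul, smul_smul,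
    hcoupling, neg_smul]

/-- If `ψ̃ = (ψ, φ_1, …, φ_K) : [0,∞) → ℂ^{(K+1)N}` is a differentiable
solution of the Schrödinger equation `ψ̃'(t) = −i H_eff ψ̃(t)` with initial condition
`φ_j(0) = 0` for all `j`, then the first component `ψ` satisfies the integro-differential
equation `ψ'(t) = −i H_S ψ(t) − ∫₀ᵗ G_Lorentz(t−s) ψ(s) ds` for all `t ≥ 0`. -/
theorem schroedinger_solution_solves_integroDifferential
    (N K : ℕ) (hN : 0 < N) (hK : 0 < K)
    (HS : Matrix (Fin N) (Fin N) ℂ) (hHS : HS.IsHermitian)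
    (g γ ε : Fin K → ℝ) (hg : ∀ j, 0 < g j) (hγ : ∀ j, 0 < γ j)
    (ψ : ℝ → Fin N → ℂ) (φ : Fin K → ℝ → Fin N → ℂ)
    (ψtilde : ℝ → (Fin N ⊕ Fin K × Fin N) → ℂ)
    (hψtilde : ∀ t, ψtilde t = Sum.elim (ψ t) fun p => φ p.1 t p.2)
    (hSchr : ∀ t : ℝ, 0 ≤ t →
      HasDerivWithinAt ψtilde
        ((-Complex.I) • (Heff N K HS g γ ε).mulVec (ψtilde t)) (Set.Ici 0) t)
    (hinit : ∀ j, φ j 0 = 0) :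
    ∀ t : ℝ, 0 ≤ t →
      HasDerivWithinAt ψ
        ((-Complex.I) • HS.mulVec (ψ t) -
          ∫ s in (0:ℝ)..t, GLorentz K g γ ε (t - s) • ψ s)
        (Set.Ici 0) t :=
  schroedinger_solution_solves_integroDifferential_general N K HS g γ ε ψ φ ψtilde hψtilde hSchr
    hinit
end
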